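/- arXiv:math/0411547 — 7 statements merged into one kernel-verified Lean document; each statement's English description precedes it below -/
import Mathlib

section
/- Let x = x₀ + x₁i + x₂j + x₃k and y = y₀ + y₁i + y₂j + y₃k be quaternions with integer coefficients, each of odd norm, and each satisfying the parity condition: if its norm is ≡ 1 (mod 4) then its real coefficient is odd and its three imaginary coefficients are even, while if its norm is ≡ 3 (mod 4) then its i-coefficient is even and the other three coefficients are odd. Then the real part of xy, namely x₀y₀ − x₁y₁ − x₂y₂ − x₃y₃, is an odd integer; in particular Re(xy) ≠ 0 and xy ≠ −yx. -/
/-- If `x, y ∈ ℍ(ℤ)` have odd norm and satisfy the parity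
conditions (norm `≡ 1 (mod 4)`: real coefficient odd, imaginary coefficients
even; norm `≡ 3 (mod 4)`: `i`-coefficient even, other coefficients odd),
then `Re(xy) = x₀y₀ − x₁y₁ − x₂y₂ − x₃y₃` is odd; in particular
`Re(xy) ≠ 0` and `xy ≠ −yx`. -/
theorem quaternion_re_mul_odd_of_parity
    (x y : Quaternion ℤ)
    (hxodd : Odd (Quaternion.normSq x)) (hyodd : Odd (Quaternion.normSq y))
    (hx1 : Quaternion.normSq x % 4 = 1 →
      Odd x.re ∧ Even x.imI ∧ Even x.imJ ∧ Even x.imK)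
    (hx3 : Quaternion.normSq x % 4 = 3 →
      Even x.imI ∧ Odd x.re ∧ Odd x.imJ ∧ Odd x.imK)
    (hy1 : Quaternion.normSq y % 4 = 1 →
      Odd y.re ∧ Even y.imI ∧ Even y.imJ ∧ Even y.imK)
    (hy3 : Quaternion.normSq y % 4 = 3 →
      Even y.imI ∧ Odd y.re ∧ Odd y.imJ ∧ Odd y.imK) :
    Odd (x.re * y.re - x.imI * y.imI - x.imJ * y.imJ - x.imK * y.imK) ∧
    (x * y).re = x.re * y.re - x.imI * y.imI - x.imJ * y.imJ - x.imK * y.imK ∧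
    (x * y).re ≠ 0 ∧ x * y ≠ -(y * x) := by
  have hx4 : Quaternion.normSq x % 4 = 1 ∨ Quaternion.normSq x % 4 = 3 := by
    obtain ⟨k, hk⟩ := hxodd; omega
  have hy4 : Quaternion.normSq y % 4 = 1 ∨ Quaternion.normSq y % 4 = 3 := by
    obtain ⟨k, hk⟩ := hyodd; omega
  have hodd : Odd (x.re * y.re - x.imI * y.imI - x.imJ * y.imJ - x.imK * y.imK) := by
    rcases hx4 with hx | hx <;> rcases hy4 with hy | hy
    · obtain ⟨⟨a, ha⟩, ⟨b, hb⟩, ⟨c, hc⟩, ⟨d, hd⟩⟩ := hx1 hx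
      obtain ⟨⟨a', ha'⟩, ⟨b', hb'⟩, ⟨c', hc'⟩, ⟨d', hd'⟩⟩ := hy1 hy
      exact ⟨2*a*a' + a + a' - 2*b*b' - 2*c*c' - 2*d*d', by
        rw [ha, hb, hc, hd, ha', hb', hc', hd']; ring⟩
    · obtain ⟨⟨a, ha⟩, ⟨b, hb⟩, ⟨c, hc⟩, ⟨d, hd⟩⟩ := hx1 hx
      obtain ⟨⟨b', hb'⟩, ⟨a', ha'⟩, ⟨c', hc'⟩, ⟨d', hd'⟩⟩ := hy3 hy
      exact ⟨2*a*a' + a + a' - 2*b*b' - 2*c*c' - c - 2*d*d' - d, by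
        rw [ha, hb, hc, hd, ha', hb', hc', hd']; ring⟩
    · obtain ⟨⟨b, hb⟩, ⟨a, ha⟩, ⟨c, hc⟩, ⟨d, hd⟩⟩ := hx3 hx
      obtain ⟨⟨a', ha'⟩, ⟨b', hb'⟩, ⟨c', hc'⟩, ⟨d', hd'⟩⟩ := hy1 hy
      exact ⟨2*a*a' + a + a' - 2*b*b' - 2*c*c' - c' - 2*d*d' - d', by
        rw [ha, hb, hc, hd, ha', hb', hc', hd']; ring⟩
    · obtain ⟨⟨b, hb⟩, ⟨a, ha⟩, ⟨c, hc⟩, ⟨d, hd⟩⟩ := hx3 hx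
      obtain ⟨⟨b', hb'⟩, ⟨a', ha'⟩, ⟨c', hc'⟩, ⟨d', hd'⟩⟩ := hy3 hy
      exact ⟨2*a*a' + a + a' - 2*b*b' - 2*c*c' - c - c' - 2*d*d' - d - d' - 1, by
        rw [ha, hb, hc, hd, ha', hb', hc', hd']; ring⟩
  have hre : (x * y).re = x.re * y.re - x.imI * y.imI - x.imJ * y.imJ - x.imK * y.imK :=
    Quaternion.re_mul x y
  refine ⟨hodd, hre, ?_, ?_⟩
  · intro h
    rw [hre] at h
    obtain ⟨k, hk⟩ := hodd
    omega
  · intro h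
    have h2 : (x * y).re = -(y * x).re := by rw [h]; simp
    have h3 : (y * x).re = y.re * x.re - y.imI * x.imI - y.imJ * x.imJ - y.imK * x.imK :=
      Quaternion.re_mul y x
    obtain ⟨k, hk⟩ := hodd
    rw [hre, h3] at h2
    ring_nf at h2 hk
    omega
end

section
/- Let φ : G → H be a group homomorphism whose kernel equals the center of G, let t ≥ 2, and let g₁, …, g_t ∈ G. Then the homomorphism from the free group F_t on t generators to H sending the i-th generator to φ(g_i) is injective if and only if the homomorphism from F_t to G sending the i-th generator to g_i is injective. In other words, φ(g₁), …, φ(g_t) freely generate a free subgroup of H of rank t if and only if g₁, …, g_t freely generate a free subgroup of G of rank t. -/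
/-!
A word `w ≠ 1` of a free group commuting with two distinct generators `a, b` commutes with one of
them, say `c`, that differs from the generator `p` of its first letter, and then with a suitable
power `c^{±1}` that does not cancel against its last letter either. The reduced words of
`c^{±1} w` and `w c^{±1}` are then `c^{±1}` prepended and appended to that of `w`, and they differ
in their first letters. So the centre of a free group of rank at least two is trivial; since the
kernel of `φ ∘ lift g` is the preimage of `Z(G)` under `lift g`, the theorem follows.
-/

theorem Subgroup.comap_center_le_center_of_injective {G H : Type*} [Group G] [Group H]
    {f : G →* H} (hf : Function.Injective f) : (center H).comap f ≤ center G := by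
  intro x hx
  rw [mem_comap, mem_center_iff] at hx
  rw [mem_center_iff]
  intro y
  apply hf
  simpa only [map_mul] using hx (f y)

namespace FreeGroup

variable {α : Type*}

theorem toWord_mul_of_isReduced_append [DecidableEq α] {x y : FreeGroup α}
    (h : IsReduced (x.toWord ++ y.toWord)) : (x * y).toWord = x.toWord ++ y.toWord := by
  rw [toWord_mul, h.reduce_eq]

theorem commute_mk_singleton {x : α × Bool} {w : FreeGroup α} (h : Commute (of x.1) w) :
    Commute (mk [x]) w := by
  obtain ⟨a, _ | _⟩ := x
  exacts [h.inv_left, h]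

theorem eq_one_of_commute_of_ne [DecidableEq α] {a b : α} (hab : a ≠ b) {w : FreeGroup α}
    (ha : Commute (of a) w) (hb : Commute (of b) w) : w = 1 := by
  by_contra hw
  have hne : w.toWord ≠ [] := mt toWord_eq_nil_iff.mp hw
  obtain ⟨⟨p, u⟩, L, hL⟩ := List.exists_cons_of_ne_nil hne
  obtain ⟨c, hcp, hc⟩ : ∃ c, c ≠ p ∧ Commute (of c) w := by
    rcases eq_or_ne a p with rfl | hap
    exacts [⟨b, hab.symm, hb⟩, ⟨a, hap, ha⟩]
  set last := w.toWord.getLast hne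
  set x : α × Bool := (c, if last.1 = c then last.2 else true)
  have hleft : (mk [x] * w).toWord = x :: w.toWord := by
    refine toWord_mul_of_isReduced_append ?_
    rw [toWord_mk, reduce_singleton, hL]
    exact List.IsChain.cons_cons (fun h => absurd h hcp) (hL ▸ isReduced_toWord)
  have hright : (w * mk [x]).toWord = w.toWord ++ [x] := by
    refine toWord_mul_of_isReduced_append ?_
    rw [toWord_mk, reduce_singleton]
    refine isReduced_toWord.append IsReduced.singleton ?_
    intro y hy z hz h
    rw [List.getLast?_eq_some_getLast hne, Option.mem_some_iff] at hy
    rw [List.head?_cons, Option.mem_some_iff] at hz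
    subst hy hz
    exact (if_pos (show last.1 = c from h)).symm
  have hwords := hleft.symm.trans ((congrArg toWord (commute_mk_singleton hc).eq).trans hright)
  rw [hL, List.cons_append, List.cons.injEq, Prod.ext_iff] at hwords
  exact hcp hwords.1.1

theorem center_eq_bot [Nontrivial α] : Subgroup.center (FreeGroup α) = ⊥ := by
  classical
  obtain ⟨a, b, hab⟩ := exists_pair_ne α
  refine (Subgroup.eq_bot_iff_forall _).mpr fun w hw => ?_
  rw [Subgroup.mem_center_iff] at hw
  exact eq_one_of_commute_of_ne hab (hw (of a)) (hw (of b))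

end FreeGroup

/-- If `φ : G → H` is a group homomorphism with kernel the center
of `G`, `t ≥ 2`, and `g₁, …, g_t ∈ G`, then `φ(g₁), …, φ(g_t)` freely generate
a free subgroup of `H` of rank `t` iff `g₁, …, g_t` freely generate a free
subgroup of `G` of rank `t`. -/
theorem free_of_image_iff_free_of_ker_eq_center
    {G H : Type*} [Group G] [Group H] (φ : G →* H)
    (hker : φ.ker = Subgroup.center G)
    (t : ℕ) (ht : 2 ≤ t) (g : Fin t → G) :
    Function.Injective (FreeGroup.lift (fun i => φ (g i))) ↔
      Function.Injective (FreeGroup.lift g) := by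
  have hcomp : FreeGroup.lift (fun i => φ (g i)) = φ.comp (FreeGroup.lift g) :=
    FreeGroup.ext_hom _ _ fun i => by simp
  have : Nontrivial (Fin t) := Fin.nontrivial_iff_two_le.mpr ht
  rw [hcomp]
  refine ⟨fun h => Function.Injective.of_comp h, fun hinj => ?_⟩
  rw [← MonoidHom.ker_eq_bot_iff, ← MonoidHom.comap_ker, hker, eq_bot_iff,
    ← FreeGroup.center_eq_bot]
  exact Subgroup.comap_center_le_center_of_injective hinj
end

section
/- Let x = 1 + j + k and y = 1 + 2i in ℍ(ℚ). Then the relation y x³ y² x y⁻¹ x⁻³ y⁻² x⁻¹ = 1 holds in the multiplicative group of nonzero quaternions. -/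
/-!
Moving the inverses to the right-hand side, the relation says that `w = y x³ y² x` equals its
reversal `x y² x³ y`. Both products equal `45 + 30i + 60j + 60k`. Conceptually: composing
conjugation with the half-turn about the axis `j - k` gives an anti-automorphism of `ℍ(ℚ)` that
fixes `x` and `y`, hence sends `w` to its reversal, and whose fixed points are exactly the
quaternions with equal `j`- and `k`-coordinates.
-/

theorem Quaternion.mk_mul_mk {R : Type*} [CommRing R] (a₁ a₂ a₃ a₄ b₁ b₂ b₃ b₄ : R) :
    (⟨a₁, a₂, a₃, a₄⟩ * ⟨b₁, b₂, b₃, b₄⟩ : Quaternion R) =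
      ⟨a₁ * b₁ - a₂ * b₂ - a₃ * b₃ - a₄ * b₄, a₁ * b₂ + a₂ * b₁ + a₃ * b₄ - a₄ * b₃,
        a₁ * b₃ - a₂ * b₄ + a₃ * b₁ + a₄ * b₂, a₁ * b₄ + a₂ * b₃ - a₃ * b₂ + a₄ * b₁⟩ := by
  ext
  · exact Quaternion.re_mul _ _
  · exact Quaternion.imI_mul _ _
  · exact Quaternion.imJ_mul _ _
  · exact Quaternion.imK_mul _ _

theorem mul_zpow_mul_zpow_mul_inv_eq_one_iff {G₀ : Type*} [GroupWithZero G₀] {x y : G₀}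
    (hx : x ≠ 0) (hy : y ≠ 0) (m n : ℤ) :
    y * x ^ m * y ^ n * x * y⁻¹ * x ^ (-m) * y ^ (-n) * x⁻¹ = 1 ↔
      y * x ^ m * y ^ n * x = x * y ^ n * x ^ m * y := by
  have hv : x * y ^ n * x ^ m * y ≠ 0 := by simp [hx, hy, zpow_ne_zero]
  rw [← mul_inv_eq_one₀ hv]
  simp only [zpow_neg, mul_inv_rev, mul_assoc]

/-- For `x = 1 + j + k` and `y = 1 + 2i` in `ℍ(ℚ)`, the relation
`y x³ y² x y⁻¹ x⁻³ y⁻² x⁻¹ = 1` holds in the multiplicative group of nonzero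
quaternions. -/
theorem relation_one_add_j_add_k_one_add_two_i
    (x y : Quaternion ℚ) (hx : x = ⟨1, 0, 1, 1⟩) (hy : y = ⟨1, 2, 0, 0⟩) :
    y * x ^ (3 : ℤ) * y ^ (2 : ℤ) * x * y⁻¹ * x ^ (-3 : ℤ) * y ^ (-2 : ℤ) * x⁻¹ = 1 := by
  have hx0 : x ≠ 0 := fun h => one_ne_zero (congrArg QuaternionAlgebra.re (hx ▸ h) : (1 : ℚ) = 0)
  have hy0 : y ≠ 0 := fun h => one_ne_zero (congrArg QuaternionAlgebra.re (hy ▸ h) : (1 : ℚ) = 0)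
  rw [mul_zpow_mul_zpow_mul_inv_eq_one_iff hx0 hy0, zpow_ofNat, zpow_ofNat, pow_three, pow_two,
    hx, hy]
  simp only [Quaternion.mk_mul_mk]
  ext <;> norm_num
end

section
/- The multiplicative group generated by the two quaternions 1 + j + k and 1 + 2i in the group of units of ℍ(ℚ) is not a free group of rank 2: the homomorphism from the free group on two generators to the units of ℍ(ℚ) sending the generators to 1 + j + k and 1 + 2i is not injective. -/
/-!
With `p = 1 + j + k` and `q = 1 + 2i`, the anti-automorphism `x ↦ u * star x * u⁻¹` of `ℍ(ℚ)`,
`u = j - k`, fixes both `p` and `q`, so it maps the value of a word in `p, q` to the value of the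
reversed word. Its fixed points are the quaternions with equal `j`- and `k`-components, and
`p q² p³ q = 45 + 30i + 60j + 60k` is one of them; hence `p q² p³ q = q p³ q² p`, a relation
between two distinct reduced words.
-/

theorem Quaternion.word_eq_reverse_of_components {R : Type*} [CommRing R] {p q : Quaternion R}
    (hp : p.re = 1 ∧ p.imI = 0 ∧ p.imJ = 1 ∧ p.imK = 1)
    (hq : q.re = 1 ∧ q.imI = 2 ∧ q.imJ = 0 ∧ q.imK = 0) :
    p * q * q * p * p * p * q = q * p * p * p * q * q * p := by
  obtain ⟨p₁, p₂, p₃, p₄⟩ := hp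
  obtain ⟨q₁, q₂, q₃, q₄⟩ := hq
  ext <;> simp only [re_mul, imI_mul, imJ_mul, imK_mul, p₁, p₂, p₃, p₄, q₁, q₂, q₃, q₄,
    mul_one, one_mul, mul_zero, zero_mul, add_zero, zero_add, sub_zero, zero_sub] <;> ring

theorem FreeGroup.of_zero_of_one_word_ne_reverse :
    (of 0 * of 1 * of 1 * of 0 * of 0 * of 0 * of 1 : FreeGroup (Fin 2)) ≠
      of 1 * of 0 * of 0 * of 0 * of 1 * of 1 * of 0 := by
  decide

/-- The quaternions `1 + j + k` and `1 + 2i` do not freely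
generate a free subgroup of rank 2 of the units of `ℍ(ℚ)`. -/
theorem one_add_j_add_k_one_add_two_i_not_free :
    ¬ Function.Injective
      (FreeGroup.lift
        (![Units.mk0 (⟨1, 0, 1, 1⟩ : Quaternion ℚ)
            (fun h => one_ne_zero (congrArg QuaternionAlgebra.re h : (1 : ℚ) = 0)),
           Units.mk0 (⟨1, 2, 0, 0⟩ : Quaternion ℚ)
            (fun h => one_ne_zero (congrArg QuaternionAlgebra.re h : (1 : ℚ) = 0))] :
          Fin 2 → (Quaternion ℚ)ˣ)) := by
  intro h_inj
  refine FreeGroup.of_zero_of_one_word_ne_reverse (h_inj ?_)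
  simp only [map_mul, FreeGroup.lift_apply_of, Matrix.cons_val_zero, Matrix.cons_val_one]
  ext : 1
  simp only [Units.val_mul]
  exact Quaternion.word_eq_reverse_of_components ⟨rfl, rfl, rfl, rfl⟩ ⟨rfl, rfl, rfl, rfl⟩
end

section
/- The two quaternions 1 + j + k and 1 + j − k freely generate a free subgroup of rank 2 of the group of units of ℍ(ℚ): the homomorphism from the free group on two generators to the units of ℍ(ℚ) sending the generators to 1 + j + k and 1 + j − k is injective. -/
/-!
Write `a = 1 + j + k` and `b = 1 + j - k`. Both have norm 3, so `ā = 3 a⁻¹` and `b̄ = 3 b⁻¹` are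
integral. A nontrivial reduced word `w` with `w(a, b) = 1` therefore gives a product of the letters
`a, ā, b, b̄`, none adjacent to its conjugate, equal to `3 ^ m` in `ℍ(ℤ)`. Reduce modulo 3 and split
`ℍ(𝔽₃) ≅ M₂(𝔽₃)`: every letter becomes a rank-one matrix `u vᵀ`, and
`u₁v₁ᵀ ⋯ uₙvₙᵀ = (∏ vᵢ ⬝ uᵢ₊₁) • u₁vₙᵀ`. The inner products vanish exactly on cancelling pairs,
so the product is a nonzero singular matrix, which cannot be the scalar `3 ^ m`.
-/

open Quaternion Matrix

namespace Quaternion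
variable {R S : Type*} [CommRing R] [CommRing S] (f : R →+* S) (a : ℍ[R])

def map : ℍ[S] := ⟨f a.re, f a.imI, f a.imJ, f a.imK⟩

@[simp] theorem re_map : (map f a).re = f a.re := rfl
@[simp] theorem imI_map : (map f a).imI = f a.imI := rfl
@[simp] theorem imJ_map : (map f a).imJ = f a.imJ := rfl
@[simp] theorem imK_map : (map f a).imK = f a.imK := rfl

theorem star_eq_normSq_smul_inv {K : Type*} [Field K] [LinearOrder K] [IsStrictOrderedRing K]
    {q : ℍ[K]} (hq : q ≠ 0) : star q = normSq q • q⁻¹ := by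
  rw [inv_def, smul_smul, mul_inv_cancel₀ (normSq_ne_zero.mpr hq), one_smul]

end Quaternion

namespace RingHom
variable {R S : Type*} [CommRing R] [CommRing S] (f : R →+* S) (a : ℍ[R])

def mapQuaternion : ℍ[R] →+* ℍ[S] where
  toFun := Quaternion.map f
  map_one' := by ext <;> simp
  map_mul' a b := by ext <;> simp [re_mul, imI_mul, imJ_mul, imK_mul]
  map_zero' := by ext <;> simp
  map_add' a b := by ext <;> simp

@[simp] theorem mapQuaternion_apply : f.mapQuaternion a = Quaternion.map f a := rfl

theorem mapQuaternion_injective {f : R →+* S} (hf : Function.Injective f) :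
    Function.Injective f.mapQuaternion := fun a b h => by
  ext
  exacts [hf congr(($h).re), hf congr(($h).imI), hf congr(($h).imJ), hf congr(($h).imK)]

theorem mapQuaternion_star : f.mapQuaternion (star a) = star (f.mapQuaternion a) := by
  ext <;> simp

theorem normSq_mapQuaternion : normSq (f.mapQuaternion a) = f (normSq a) := by
  simp [normSq_def']

end RingHom

theorem List.exists_prod_map_eq_pow_smul_prod_map {k A α : Type*} [CommSemiring k] [Semiring A]
    [Algebra k A] {r : k} {f g : α → A} (hfg : ∀ x, ∃ e : ℕ, f x = r ^ e • g x) (L : List α) :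
    ∃ m : ℕ, (L.map f).prod = r ^ m • (L.map g).prod := by
  induction L with
  | nil => exact ⟨0, by simp⟩
  | cons x L ih =>
    obtain ⟨e, he⟩ := hfg x
    obtain ⟨m, hm⟩ := ih
    refine ⟨e + m, ?_⟩
    rw [map_cons, map_cons, prod_cons, prod_cons, he, hm, smul_mul_smul_comm, pow_add]

namespace Matrix
variable {R n ι : Type*} [Fintype n] [DecidableEq n]

theorem exists_prod_map_vecMulVec_eq_smul [CommSemiring R] [NoZeroDivisors R] [Nontrivial R]
    (u v : ι → n → R) {a : ι} {l : List ι} (h : (a :: l).IsChain fun x y => v x ⬝ᵥ u y ≠ 0) :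
    ∃ c ≠ (0 : R), ∃ b ∈ a :: l,
      ((a :: l).map fun x => vecMulVec (u x) (v x)).prod = c • vecMulVec (u a) (v b) := by
  induction l generalizing a with
  | nil => exact ⟨1, one_ne_zero, a, List.mem_singleton_self a, by simp⟩
  | cons y l ih =>
    obtain ⟨hay, hchain⟩ := List.isChain_cons_cons.mp h
    obtain ⟨c, hc, b, hb, hprod⟩ := ih hchain
    refine ⟨c * (v a ⬝ᵥ u y), mul_ne_zero hc hay, b, List.mem_cons_of_mem a hb, ?_⟩
    rw [List.map_cons, List.prod_cons, hprod, mul_smul_comm, vecMulVec_mul_vecMulVec,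
      vecMulVec_smul, smul_smul]

theorem vecMulVec_ne_scalar [Field R] [Nontrivial n] {u v : n → R} (hu : u ≠ 0) (hv : v ≠ 0)
    (t : R) : vecMulVec u v ≠ scalar n t := by
  intro h
  have ht : t ^ Fintype.card n = 0 := by
    simpa [det_vecMulVec, scalar_apply, det_diagonal, eq_comm] using congrArg det h
  rw [pow_eq_zero_iff Fintype.card_ne_zero] at ht
  exact vecMulVec_ne_zero hu hv (by rw [h, ht, map_zero])

end Matrix

/-- The letter `x` of a free-group word, with an inverse letter `q⁻¹` replaced by its integral
multiple `q̄ = N(q) q⁻¹`. -/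
def starLetter {ι R : Type*} [CommRing R] (q : ι → ℍ[R]) (x : ι × Bool) : ℍ[R] :=
  bif x.2 then q x.1 else star (q x.1)

theorem exists_prod_map_starLetter_eq_pow {ι : Type*} {n : ℤ} (q : ι → ℍ[ℤ])
    (hq : ∀ i, normSq (q i) = n) (g : ι → ℍ[ℚ]ˣ)
    (hg : ∀ i, (g i : ℍ[ℚ]) = (Int.castRingHom ℚ).mapQuaternion (q i)) {L : List (ι × Bool)}
    (hL : FreeGroup.lift g (FreeGroup.mk L) = 1) :
    ∃ m : ℕ, (L.map (starLetter q)).prod = ((n ^ m : ℤ) : ℍ[ℤ]) := by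
  set τ := (Int.castRingHom ℚ).mapQuaternion
  have hletter : ∀ x : ι × Bool, ∃ e : ℕ,
      τ (starLetter q x) = (n : ℚ) ^ e • ((cond x.2 (g x.1) (g x.1)⁻¹ : ℍ[ℚ]ˣ) : ℍ[ℚ]) := by
    rintro ⟨i, _ | _⟩
    · have hnorm : normSq (g i : ℍ[ℚ]) = n := by
        rw [hg, RingHom.normSq_mapQuaternion, hq, eq_intCast]
      refine ⟨1, ?_⟩
      rw [starLetter, cond_false, cond_false, RingHom.mapQuaternion_star, ← hg,
        star_eq_normSq_smul_inv (g i).ne_zero, hnorm, pow_one, Units.val_inv_eq_inv_val]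
    · exact ⟨0, by simp [starLetter, hg, τ]⟩
  obtain ⟨m, hm⟩ := List.exists_prod_map_eq_pow_smul_prod_map hletter L
  have hL' : (L.map fun x => ((cond x.2 (g x.1) (g x.1)⁻¹ : ℍ[ℚ]ˣ) : ℍ[ℚ])).prod = 1 := by
    simpa [FreeGroup.lift_mk, map_list_prod, Function.comp_def] using
      congrArg (Units.coeHom ℍ[ℚ]) hL
  refine ⟨m, RingHom.mapQuaternion_injective (Int.castRingHom ℚ).injective_int ?_⟩
  rw [map_list_prod, List.map_map, Function.comp_def, hm, hL', map_intCast]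
  simp [Algebra.smul_def]

/-- Images of `i` and `j` under a splitting `ℍ(𝔽₃) ≅ M₂(𝔽₃)`, which exists because
`-1 = 1 + 1` in `𝔽₃`. -/
def quaternionBasisMatrixZMod3 :
    QuaternionAlgebra.Basis (Matrix (Fin 2) (Fin 2) (ZMod 3)) (-1 : ℤ) 0 (-1) where
  i := !![1, 1; 1, -1]
  j := !![0, -1; 1, 0]
  k := !![1, 1; 1, -1] * !![0, -1; 1, 0]
  i_mul_i := by decide
  j_mul_j := by decide
  i_mul_j := rfl
  j_mul_i := by decide

def toMatrixModThree : ℍ[ℤ] →ₐ[ℤ] Matrix (Fin 2) (Fin 2) (ZMod 3) :=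
  QuaternionAlgebra.lift quaternionBasisMatrixZMod3

def integralGenerator : Fin 2 → ℍ[ℤ] := ![⟨1, 0, 1, 1⟩, ⟨1, 0, 1, -1⟩]

theorem normSq_integralGenerator : ∀ i, normSq (integralGenerator i) = 3 := by decide

def letterCol (x : Fin 2 × Bool) : Fin 2 → ZMod 3 :=
  bif x.2 then ![![1, 0], ![0, 1]] x.1 else ![![1, 1], ![2, 1]] x.1

def letterRow (x : Fin 2 × Bool) : Fin 2 → ZMod 3 :=
  bif x.2 then ![![2, 1], ![2, 2]] x.1 else ![![0, 2], ![1, 0]] x.1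

theorem toMatrixModThree_starLetter : ∀ x : Fin 2 × Bool,
    toMatrixModThree (starLetter integralGenerator x) = vecMulVec (letterCol x) (letterRow x) := by
  decide

theorem letterRow_dotProduct_letterCol : ∀ x y : Fin 2 × Bool, (x.1 = y.1 → x.2 = y.2) →
    letterRow x ⬝ᵥ letterCol y ≠ 0 := by
  decide

theorem letterCol_ne_zero : ∀ x, letterCol x ≠ 0 := by decide

theorem letterRow_ne_zero : ∀ x, letterRow x ≠ 0 := by decide

theorem prod_map_starLetter_ne_intCast {a : Fin 2 × Bool} {l : List (Fin 2 × Bool)}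
    (h : FreeGroup.IsReduced (a :: l)) (z : ℤ) :
    ((a :: l).map (starLetter integralGenerator)).prod ≠ z := by
  intro hz
  obtain ⟨c, hc, b, -, hprod⟩ :=
    exists_prod_map_vecMulVec_eq_smul letterCol letterRow (h.imp letterRow_dotProduct_letterCol)
  refine vecMulVec_ne_scalar (smul_ne_zero hc (letterCol_ne_zero a)) (letterRow_ne_zero b)
    (z : ZMod 3) ?_
  calc vecMulVec (c • letterCol a) (letterRow b)
      = ((a :: l).map fun x => vecMulVec (letterCol x) (letterRow x)).prod := by
        rw [hprod, smul_vecMulVec]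
    _ = toMatrixModThree ((a :: l).map (starLetter integralGenerator)).prod := by
        simp only [map_list_prod, List.map_map, Function.comp_def, toMatrixModThree_starLetter]
    _ = scalar (Fin 2) (z : ZMod 3) := by rw [hz, map_intCast, map_intCast]

/-- The quaternions `1 + j + k` and `1 + j − k` freely generate
a free subgroup of rank 2 of the units of `ℍ(ℚ)`. -/
theorem one_add_j_add_k_one_add_j_sub_k_free :
    Function.Injective
      (FreeGroup.lift
        (![Units.mk0 (⟨1, 0, 1, 1⟩ : Quaternion ℚ)
            (fun h => one_ne_zero (α := ℚ) (congrArg QuaternionAlgebra.re h)),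
           Units.mk0 (⟨1, 0, 1, -1⟩ : Quaternion ℚ)
            (fun h => one_ne_zero (α := ℚ) (congrArg QuaternionAlgebra.re h))] :
          Fin 2 → (Quaternion ℚ)ˣ)) := by
  rw [injective_iff_map_eq_one]
  intro w hw
  rw [← FreeGroup.mk_toWord (x := w)] at hw
  obtain ⟨m, hm⟩ := exists_prod_map_starLetter_eq_pow integralGenerator normSq_integralGenerator _
    (Fin.forall_fin_two.mpr ⟨rfl, rfl⟩) hw
  rcases hword : w.toWord with _ | ⟨a, l⟩
  · exact FreeGroup.toWord_eq_nil_iff.mp hword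
  · rw [hword] at hm
    exact absurd hm (prod_map_starLetter_ne_intCast (hword ▸ FreeGroup.isReduced_toWord) _)
end

section
/- The two rational rotation matrices A = (1/3)·[[−1, −2, 2], [2, 1, 2], [−2, 2, 1]] and B = (1/3)·[[−1, 2, 2], [−2, 1, −2], [−2, −2, 1]] freely generate a free subgroup of rank 2 of SO₃(ℚ): the homomorphism from the free group on two generators to the group of invertible 3×3 rational matrices sending the generators to A and B is injective. -/
/-!
The integer matrices `3A`, `3B` and their transposes `3A⁻¹`, `3B⁻¹` all have rank one
modulo 3, say `uₓ vₓᵀ` for the letter `x`, and `vₓ ⬝ uᵧ ≢ 0 (mod 3)` unless `y` cancels `x`.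
Hence for a reduced word of length `ℓ ≥ 1` the integer matrix `3^ℓ w(A, B)` is a product of
rank-one matrices that does not vanish modulo 3, whereas `w(A, B) = 1` would make it
`3^ℓ • 1 ≡ 0`.
-/

open Matrix

theorem List.prod_map_smul_const {ι R A : Type*} [CommSemiring R] [Semiring A] [Algebra R A]
    (c : R) (f : ι → A) :
    ∀ l : List ι, (l.map fun i => c • f i).prod = c ^ l.length • (l.map f).prod
  | [] => by simp
  | i :: l => by
    rw [map_cons, prod_cons, prod_map_smul_const c f l, map_cons, prod_cons,
      smul_mul_smul_comm, length_cons, pow_succ']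

theorem Matrix.map_list_prod {n R S : Type*} [Fintype n] [DecidableEq n] [Semiring R]
    [Semiring S] (f : R →+* S) (l : List (Matrix n n R)) :
    l.prod.map f = (l.map fun M => M.map f).prod :=
  _root_.map_list_prod (RingHom.mapMatrix (m := n) f) l

theorem Matrix.map_smul_one {n R S : Type*} [DecidableEq n] [Semiring R] [Semiring S]
    (f : R →+* S) (c : R) : (c • (1 : Matrix n n R)).map f = f c • 1 := by
  rw [Matrix.map_smul' _ _ _ (map_mul f), Matrix.map_one _ (map_zero f) (map_one f)]

theorem Matrix.exists_prod_map_vecMulVec_eq {ι n R : Type*} [Fintype n] [DecidableEq n]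
    [CommRing R] [NoZeroDivisors R] (u v : ι → n → R) (hv : ∀ i, v i ≠ 0) :
    ∀ (i : ι) (l : List ι), (i :: l).IsChain (fun a b => v a ⬝ᵥ u b ≠ 0) →
      ∃ w ≠ 0, ((i :: l).map fun a => vecMulVec (u a) (v a)).prod = vecMulVec (u i) w
  | i, [], _ => ⟨v i, hv i, by simp⟩
  | i, j :: l, h => by
    rw [List.isChain_cons_cons] at h
    obtain ⟨w, hw, hprod⟩ := exists_prod_map_vecMulVec_eq u v hv j l h.2
    refine ⟨(v i ⬝ᵥ u j) • w, smul_ne_zero h.1 hw, ?_⟩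
    rw [List.map_cons, List.prod_cons, hprod, vecMulVec_mul_vecMulVec]

theorem Matrix.prod_map_vecMulVec_ne_zero {ι n R : Type*} [Fintype n] [DecidableEq n]
    [CommRing R] [NoZeroDivisors R] (u v : ι → n → R) (hu : ∀ i, u i ≠ 0)
    (hv : ∀ i, v i ≠ 0) {l : List ι} (hl : l ≠ [])
    (hchain : l.IsChain fun i j => v i ⬝ᵥ u j ≠ 0) :
    (l.map fun i => vecMulVec (u i) (v i)).prod ≠ 0 := by
  obtain ⟨i, l, rfl⟩ := List.exists_cons_of_ne_nil hl
  obtain ⟨w, hw, hprod⟩ := exists_prod_map_vecMulVec_eq u v hv i l hchain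
  exact hprod ▸ vecMulVec_ne_zero (hu i) hw

theorem Matrix.GeneralLinearGroup.smul_coe_inv_eq_map_transpose {n : Type*} [Fintype n]
    [DecidableEq n] {c : ℕ} (hc : c ≠ 0) {g : GL n ℚ} {M : Matrix n n ℤ}
    (hg : (c : ℚ) • (g : Matrix n n ℚ) = M.map (↑)) (hM : M * Mᵀ = (c : ℤ) ^ 2 • 1) :
    (c : ℚ) • ((g⁻¹ : GL n ℚ) : Matrix n n ℚ) = Mᵀ.map (↑) := by
  have horth : (g : Matrix n n ℚ) * (g : Matrix n n ℚ)ᵀ = 1 := by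
    refine smul_right_injective _ (pow_ne_zero 2 (Nat.cast_ne_zero.mpr hc) : (c : ℚ) ^ 2 ≠ 0) ?_
    calc (c : ℚ) ^ 2 • ((g : Matrix n n ℚ) * (g : Matrix n n ℚ)ᵀ)
        = ((c : ℚ) • (g : Matrix n n ℚ)) * ((c : ℚ) • (g : Matrix n n ℚ))ᵀ := by
          rw [transpose_smul, smul_mul_smul_comm, sq]
      _ = (M * Mᵀ).map (Int.castRingHom ℚ) := by rw [hg, Matrix.map_mul, transpose_map]; rfl
      _ = (c : ℚ) ^ 2 • 1 := by rw [hM, map_smul_one]; simp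
  rw [Units.inv_eq_of_mul_eq_one_right horth, ← transpose_smul, hg, transpose_map]

theorem Matrix.GeneralLinearGroup.smul_coe_cond_inv_eq_map {α n : Type*} [Fintype n]
    [DecidableEq n] {c : ℕ} (hc : c ≠ 0) (f : α → GL n ℚ) (M : α → Matrix n n ℤ)
    (hf : ∀ a, (c : ℚ) • (f a : Matrix n n ℚ) = (M a).map (↑))
    (hM : ∀ a, M a * (M a)ᵀ = (c : ℤ) ^ 2 • 1) (x : α × Bool) :
    (c : ℚ) • ((cond x.2 (f x.1) (f x.1)⁻¹ : GL n ℚ) : Matrix n n ℚ)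
      = (cond x.2 (M x.1) (M x.1)ᵀ).map (↑) := by
  obtain ⟨a, _ | _⟩ := x
  · exact smul_coe_inv_eq_map_transpose hc (hf a) (hM a)
  · exact hf a

theorem FreeGroup.lift_eq_prod_toWord {α G : Type*} [DecidableEq α] [Group G] (f : α → G)
    (g : FreeGroup α) : lift f g = (g.toWord.map fun x => cond x.2 (f x.1) (f x.1)⁻¹).prod := by
  conv_lhs => rw [← mk_toWord (x := g)]
  exact lift_mk

theorem FreeGroup.injective_lift_of_rank_one_mod_prime {α n : Type*} [Fintype n]
    [DecidableEq n] (p : ℕ) [Fact p.Prime] (f : α → GL n ℚ)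
    (N : α × Bool → Matrix n n ℤ)
    (hN : ∀ x, (p : ℚ) • ((cond x.2 (f x.1) (f x.1)⁻¹ : GL n ℚ) : Matrix n n ℚ)
      = (N x).map (↑))
    (u v : α × Bool → n → ZMod p) (hNmod : ∀ x, (N x).map (↑) = vecMulVec (u x) (v x))
    (hu : ∀ x, u x ≠ 0) (hv : ∀ x, v x ≠ 0)
    (huv : ∀ x y, (x.1 = y.1 → x.2 = y.2) → v x ⬝ᵥ u y ≠ 0) :
    Function.Injective (lift f) := by
  classical
  rw [injective_iff_map_eq_one]
  intro g hg
  by_contra hg1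
  have hL : g.toWord ≠ [] := fun h => hg1 (toWord_eq_nil_iff.mp h)
  have hprodℚ : (g.toWord.map N).prod.map (Int.castRingHom ℚ)
      = ((p : ℤ) ^ g.toWord.length • 1 : Matrix n n ℤ).map (Int.castRingHom ℚ) := by
    have hword := congrArg (Units.coeHom (Matrix n n ℚ)) ((lift_eq_prod_toWord f g).symm.trans hg)
    rw [_root_.map_list_prod, _root_.map_one, List.map_map] at hword
    rw [Matrix.map_list_prod, List.map_map, map_smul_one, map_pow, map_natCast, ← hword,
      ← List.prod_map_smul_const]
    exact congrArg List.prod (List.map_congr_left fun x _ => (hN x).symm)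
  have hprodp : (g.toWord.map N).prod.map (Int.castRingHom (ZMod p)) = 0 := by
    rw [Matrix.map_injective Int.cast_injective hprodℚ, map_smul_one]
    simp [hL]
  apply Matrix.prod_map_vecMulVec_ne_zero u v hu hv hL (isReduced_toWord.imp fun x y => huv x y)
  rw [← hprodp, Matrix.map_list_prod, List.map_map]
  exact congrArg List.prod (List.map_congr_left fun x _ => (hNmod x).symm)

/-- `3A` and `3B`. -/
def rotationGen : Fin 2 → Matrix (Fin 3) (Fin 3) ℤ :=
  ![!![-1, -2, 2; 2, 1, 2; -2, 2, 1], !![-1, 2, 2; -2, 1, -2; -2, -2, 1]]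

def rotationLetter (x : Fin 2 × Bool) : Matrix (Fin 3) (Fin 3) ℤ :=
  cond x.2 (rotationGen x.1) (rotationGen x.1)ᵀ

def rotationLetterCol (x : Fin 2 × Bool) : Fin 3 → ZMod 3 :=
  cond x.2 (![![1, 1, 2], ![2, 1, 1]] x.1) (![![1, 2, 1], ![1, 1, 1]] x.1)

def rotationLetterRow (x : Fin 2 × Bool) : Fin 3 → ZMod 3 :=
  cond x.2 (![![2, 1, 2], ![1, 1, 1]] x.1) (![![2, 2, 1], ![2, 1, 1]] x.1)

theorem rotationGen_mul_transpose (i : Fin 2) :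
    rotationGen i * (rotationGen i)ᵀ = (9 : ℤ) • 1 := by
  fin_cases i <;> decide

theorem rotationLetter_map_zmod (x : Fin 2 × Bool) :
    (rotationLetter x).map (↑) = vecMulVec (rotationLetterCol x) (rotationLetterRow x) := by
  obtain ⟨i, b⟩ := x
  fin_cases i <;> cases b <;> decide

theorem rotationLetterCol_ne_zero (x : Fin 2 × Bool) : rotationLetterCol x ≠ 0 := by
  revert x; decide

theorem rotationLetterRow_ne_zero (x : Fin 2 × Bool) : rotationLetterRow x ≠ 0 := by
  revert x; decide

theorem rotationLetterRow_dotProduct_col_ne_zero (x y : Fin 2 × Bool)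
    (h : x.1 = y.1 → x.2 = y.2) : rotationLetterRow x ⬝ᵥ rotationLetterCol y ≠ 0 := by
  revert x y; decide

/-- The rational rotation matrices
`A = (1/3)·[[−1, −2, 2], [2, 1, 2], [−2, 2, 1]]` and
`B = (1/3)·[[−1, 2, 2], [−2, 1, −2], [−2, −2, 1]]` freely generate a free
subgroup of rank 2 of the group of invertible 3×3 rational matrices. -/
theorem two_rational_rotations_free :
    Function.Injective
      (FreeGroup.lift
        (![Matrix.GeneralLinearGroup.mkOfDetNeZero
            (!![(-1 : ℚ)/3, (-2 : ℚ)/3, 2/3;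
                (2 : ℚ)/3, (1 : ℚ)/3, 2/3;
                (-2 : ℚ)/3, (2 : ℚ)/3, 1/3])
            (by norm_num [Matrix.det_fin_three, Matrix.vecHead, Matrix.vecTail, Matrix.cons_val_two]),
           Matrix.GeneralLinearGroup.mkOfDetNeZero
            (!![(-1 : ℚ)/3, (2 : ℚ)/3, 2/3;
                (-2 : ℚ)/3, (1 : ℚ)/3, (-2 : ℚ)/3;
                (-2 : ℚ)/3, (-2 : ℚ)/3, 1/3])
            (by norm_num [Matrix.det_fin_three, Matrix.vecHead, Matrix.vecTail, Matrix.cons_val_two])] :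
          Fin 2 → GL (Fin 3) ℚ)) := by
  refine FreeGroup.injective_lift_of_rank_one_mod_prime 3 _ rotationLetter
    (GeneralLinearGroup.smul_coe_cond_inv_eq_map three_ne_zero _ rotationGen (fun i => ?_)
      rotationGen_mul_transpose)
    rotationLetterCol rotationLetterRow rotationLetter_map_zmod rotationLetterCol_ne_zero
    rotationLetterRow_ne_zero rotationLetterRow_dotProduct_col_ne_zero
  ext j k
  fin_cases i <;> fin_cases j <;> fin_cases k <;> norm_num [rotationGen]
end

section
/- The two rational rotation matrices [[1, 0, 0], [0, −3/5, −4/5], [0, 4/5, −3/5]] and [[−15/17, −8/17, 0], [8/17, −15/17, 0], [0, 0, 1]] do not freely generate a free subgroup of rank 2 of SO₃(ℚ): the homomorphism from the free group on two generators to the group of invertible 3×3 rational matrices sending the generators to these two matrices is not injective, i.e., the two matrices satisfy a nontrivial relation. -/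
set_option maxHeartbeats 4000000

private lemma coe_mkDet (A : Matrix (Fin 3) (Fin 3) ℚ) (h : A.det ≠ 0) :
    ((Matrix.GeneralLinearGroup.mkOfDetNeZero A h : GL (Fin 3) ℚ) : Matrix (Fin 3) (Fin 3) ℚ) = A :=
  rfl

private def relWord : List (Fin 2 × Bool) := [(1, true), (0, true), (0, true), (0, true), (1, false), (1, false), (0, true), (1, true), (0, true), (0, true), (1, false), (0, false), (0, false), (0, false), (0, false), (0, false), (0, false), (0, false), (0, false), (1, false), (0, false), (1, false), (0, false), (0, false), (1, true), (1, true), (0, false), (1, false), (0, false), (1, true), (0, true), (1, false), (1, false), (0, true), (1, true), (0, false), (0, false), (0, false), (0, false), (0, false), (0, false), (0, false), (0, false), (1, true), (0, false), (0, false), (1, false), (0, false), (1, true), (1, true), (0, false), (0, false), (0, false), (0, false), (1, true), (0, true), (0, true), (1, false), (0, false), (0, false), (0, false), (1, true), (1, true), (0, false), (1, false), (0, false), (0, false), (1, true), (0, true), (0, true), (0, true), (0, true), (0, true), (0, true), (0, true), (0, true), (1, true), (0, true), (1, true), (0, true), (0, true), (1, false), (1, false), (0, true), (1, true), (0, true),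 (1, false), (0, false), (1, true), (1, true), (0, false), (1, false), (0, true), (0, true), (0, true), (0, true), (0, true), (0, true), (0, true), (0, true), (1, false), (0, true), (0, true), (1, true), (0, true), (1, false), (1, false), (0, true), (0, true), (0, true), (0, true), (1, false), (0, false), (0, false)]

/-- The rational rotation matrices
`[[1, 0, 0], [0, −3/5, −4/5], [0, 4/5, −3/5]]` and
`[[−15/17, −8/17, 0], [8/17, −15/17, 0], [0, 0, 1]]` do not freely generate a
free subgroup of rank 2 of the group of invertible 3×3 rational matrices. -/
theorem two_rational_rotations_not_free :
    ¬ Function.Injective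
      (FreeGroup.lift
        (![Matrix.GeneralLinearGroup.mkOfDetNeZero
            (!![(1 : ℚ), 0, 0;
                (0 : ℚ), (-3 : ℚ)/5, (-4 : ℚ)/5;
                (0 : ℚ), (4 : ℚ)/5, (-3 : ℚ)/5])
            (by simp [Matrix.det_fin_three]; norm_num),
           Matrix.GeneralLinearGroup.mkOfDetNeZero
            (!![(-15 : ℚ)/17, (-8 : ℚ)/17, 0;
                (8 : ℚ)/17, (-15 : ℚ)/17, 0;
                (0 : ℚ), 0, 1])
            (by simp [Matrix.det_fin_three]; norm_num)] :
          Fin 2 → GL (Fin 3) ℚ)) := by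
  intro h
  have e0 : ∀ (p : (!![(1 : ℚ), 0, 0;
                (0 : ℚ), (-3 : ℚ)/5, (-4 : ℚ)/5;
                (0 : ℚ), (4 : ℚ)/5, (-3 : ℚ)/5]).det ≠ 0)
      (q : (!![(1 : ℚ), 0, 0;
                (0 : ℚ), (-3 : ℚ)/5, (4 : ℚ)/5;
                (0 : ℚ), (-4 : ℚ)/5, (-3 : ℚ)/5]).det ≠ 0),
      (Matrix.GeneralLinearGroup.mkOfDetNeZero
        (!![(1 : ℚ), 0, 0;
                (0 : ℚ), (-3 : ℚ)/5, (-4 : ℚ)/5;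
                (0 : ℚ), (4 : ℚ)/5, (-3 : ℚ)/5]) p)⁻¹ =
      Matrix.GeneralLinearGroup.mkOfDetNeZero
        (!![(1 : ℚ), 0, 0;
                (0 : ℚ), (-3 : ℚ)/5, (4 : ℚ)/5;
                (0 : ℚ), (-4 : ℚ)/5, (-3 : ℚ)/5]) q := by
    intro p q
    refine inv_eq_of_mul_eq_one_right (Units.ext ?_)
    simp only [Units.val_mul, Units.val_one, coe_mkDet]
    norm_num [Matrix.mul_fin_three]
    exact Matrix.one_fin_three.symm
  have e1 : ∀ (p : (!![(-15 : ℚ)/17, (-8 : ℚ)/17, 0;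
                (8 : ℚ)/17, (-15 : ℚ)/17, 0;
                (0 : ℚ), 0, 1]).det ≠ 0)
      (q : (!![(-15 : ℚ)/17, (8 : ℚ)/17, 0;
                (-8 : ℚ)/17, (-15 : ℚ)/17, 0;
                (0 : ℚ), 0, 1]).det ≠ 0),
      (Matrix.GeneralLinearGroup.mkOfDetNeZero
        (!![(-15 : ℚ)/17, (-8 : ℚ)/17, 0;
                (8 : ℚ)/17, (-15 : ℚ)/17, 0;
                (0 : ℚ), 0, 1]) p)⁻¹ =
      Matrix.GeneralLinearGroup.mkOfDetNeZero
        (!![(-15 : ℚ)/17, (8 : ℚ)/17, 0;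
                (-8 : ℚ)/17, (-15 : ℚ)/17, 0;
                (0 : ℚ), 0, 1]) q := by
    intro p q
    refine inv_eq_of_mul_eq_one_right (Units.ext ?_)
    simp only [Units.val_mul, Units.val_one, coe_mkDet]
    norm_num [Matrix.mul_fin_three]
    exact Matrix.one_fin_three.symm
  have h1 : (FreeGroup.mk relWord : FreeGroup (Fin 2)) = 1 := by
    apply h
    rw [map_one, FreeGroup.lift_mk]
    simp only [relWord, List.map_cons, List.map_nil, cond_true, cond_false,
      Matrix.cons_val_zero, Matrix.cons_val_one, Matrix.head_cons,
      List.prod_cons, List.prod_nil, mul_one]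
    rw [e0 _ (by simp [Matrix.det_fin_three]; norm_num),
        e1 _ (by simp [Matrix.det_fin_three]; norm_num)]
    refine Units.ext ?_
    simp only [Units.val_mul, Units.val_one, coe_mkDet]
    norm_num [Matrix.mul_fin_three]
    exact Matrix.one_fin_three.symm
  have h2 := congrArg FreeGroup.toWord h1
  rw [FreeGroup.toWord_mk, FreeGroup.toWord_one] at h2
  exact absurd h2 (by decide)
end
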